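/- arXiv:2202.00320 — 2 statements merged into one kernel-verified Lean document; each statement's English description precedes it below -/
import Mathlib

section
/- For a demand distribution whose support graph is a single directed star with root r (all requests are of the form (r, v_i) with probability p_i, sorted non-increasingly), the minimum possible weighted average path length over all networks with out-degree at most k at every node is achieved by a k-ary tree rooted at r in which nodes are placed in order of decreasing probability, and this optimum equals Σ_i p_i · depth(i), where depth(i) = ⌈log_k(i(k−1)/k + 1)⌉ is the depth of the i-th position in breadth-first order of the complete k-ary tree. In particular, for any out-degree-k network N, Σ_i p_i · dist_N(r, v_i) ≥ Σ_i p_i · (depth of the i-th slot in the complete k-ary tree). -/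
/-!
Write each depth as `∑_d [d < depth]`: both sides become sums over `d` of the probability mass
of the destinations deeper than `d`. In the complete `k`-ary tree the `∑_{j=1}^d k^j` slots of
depth `≤ d` take the most probable destinations, so its deep set is a tail of the order. In a
network of out-degree `≤ k` at most `k^j` vertices are reached from `r` by walks of length
exactly `j`, so at most `∑_{j=1}^d k^j` destinations lie within distance `d`. The network's deep
set is thus at least as large as the tail, and a tail carries the least mass of non-increasing
non-negative weights among sets of its size.
-/

/-- `relPow E n a b` : there is a directed path of length exactly `n` from `a` to
`b` along the relation `E`. -/
def relPow {V : Type*} (E : V → V → Prop) : ℕ → V → V → Prop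
  | 0 => Eq
  | n + 1 => fun a c => ∃ b, E a b ∧ relPow E n b c

/-- The depth of the `i`-th (1-indexed) non-root slot, in breadth-first order, of
the complete `k`-ary tree: `⌈log_k (i (k-1) / k + 1)⌉`. -/
noncomputable def slotDepth (k i : ℕ) : ℕ :=
  ⌈Real.logb k ((i : ℝ) * ((k : ℝ) - 1) / k + 1)⌉₊

open Finset

section Exchange

variable {ι M : Type*} [AddCommMonoid M] [LinearOrder M] [IsOrderedAddMonoid M]

theorem Finset.sum_le_sum_of_card_le_of_forall_le {p : ι → M} {s t : Finset ι}
    (hcard : #s ≤ #t) (hle : ∀ i ∈ s, ∀ j ∈ t, p i ≤ p j) (hnn : ∀ j ∈ t, 0 ≤ p j) :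
    ∑ i ∈ s, p i ≤ ∑ j ∈ t, p j := by
  rcases t.eq_empty_or_nonempty with rfl | ht
  · simp [card_eq_zero.mp (Nat.le_zero.mp hcard)]
  obtain ⟨j₀, hj₀, hmin⟩ := t.exists_min_image p ht
  calc ∑ i ∈ s, p i ≤ #s • p j₀ := sum_le_card_nsmul _ _ _ fun i hi => hle i hi j₀ hj₀
    _ ≤ #t • p j₀ := nsmul_le_nsmul_left (hnn j₀ hj₀) hcard
    _ ≤ ∑ j ∈ t, p j := card_nsmul_le_sum _ _ _ hmin

theorem Finset.sum_le_sum_of_isUpperSet [LinearOrder ι] {p : ι → M} (hp : Antitone p)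
    (hnn : ∀ i, 0 ≤ p i) {T A : Finset ι} (hT : IsUpperSet (T : Set ι)) (hcard : #T ≤ #A) :
    ∑ i ∈ T, p i ≤ ∑ i ∈ A, p i := by
  classical
  rw [← sum_inter_add_sum_sdiff T A, ← sum_inter_add_sum_sdiff A T, inter_comm]
  refine add_le_add_right (sum_le_sum_of_card_le_of_forall_le
    (card_sdiff_le_card_sdiff_iff.mpr hcard) (fun i hi j hj => hp ?_) fun j _ => hnn j) _
  by_contra! hij
  exact (mem_sdiff.mp hj).2 (hT hij.le (mem_sdiff.mp hi).1)

end Exchange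

theorem Fin.card_filter_le_val_le {m t : ℕ} (A : Finset (Fin m)) (hA : #Aᶜ ≤ t) :
    #{i : Fin m | t ≤ i.1} ≤ #A := by
  have hlt := Fin.card_filter_val_lt (n := m) (m := t)
  have hsplit := card_filter_add_card_filter_not (s := univ) (fun i : Fin m => i.1 < t)
  have hA' := card_add_card_compl A
  simp only [not_lt, card_univ, Fintype.card_fin] at hsplit hA'
  omega

theorem Finset.sum_mul_natCast_eq_sum_range_sum_filter_lt {ι R : Type*} [CommSemiring R]
    (s : Finset ι) (p : ι → R) (f : ι → ℕ) {D : ℕ} (hf : ∀ i ∈ s, f i ≤ D) :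
    ∑ i ∈ s, p i * f i = ∑ d ∈ range D, ∑ i ∈ s with d < f i, p i := by
  simp_rw [sum_filter]
  rw [sum_comm]
  refine sum_congr rfl fun i hi => ?_
  have hrange : {d ∈ range D | d < f i} = range (f i) := by
    ext d
    simp only [mem_filter, mem_range]
    exact ⟨And.right, fun h => ⟨h.trans_le (hf i hi), h⟩⟩
  rw [← sum_filter, hrange, sum_const, card_range, nsmul_eq_mul, mul_comm]

section Network

variable {V : Type*} {E : V → V → Prop}

theorem relPow_succ_iff_right {n : ℕ} {a c : V} :
    relPow E (n + 1) a c ↔ ∃ b, relPow E n a b ∧ E b c := by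
  induction n generalizing a with
  | zero => simp [relPow]
  | succ n ih =>
    simp only [relPow] at ih ⊢
    constructor
    · rintro ⟨b, hab, hbc⟩
      obtain ⟨w, hw, hwc⟩ := ih.1 hbc
      exact ⟨w, ⟨b, hab, hw⟩, hwc⟩
    · rintro ⟨w, ⟨b, hab, hbw⟩, hwc⟩
      exact ⟨b, hab, ih.2 ⟨w, hbw, hwc⟩⟩

variable [Fintype V] {k : ℕ}

theorem ncard_setOf_relPow_le (hout : ∀ u : V, {w | E u w}.ncard ≤ k) (a : V) (d : ℕ) :
    {w | relPow E d a w}.ncard ≤ k ^ d := by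
  classical
  simp only [Set.ncard_eq_toFinset_card', Set.toFinset_ofPred] at hout ⊢
  induction d with
  | zero =>
    exact card_le_one.mpr fun x hx y hy => (mem_filter.mp hx).2.symm.trans (mem_filter.mp hy).2
  | succ d ih =>
    have hsub : univ.filter (relPow E (d + 1) a) ⊆
        (univ.filter (relPow E d a)).biUnion fun b => univ.filter (E b) := by
      intro w hw
      obtain ⟨b, hab, hbw⟩ := relPow_succ_iff_right.mp (mem_filter.mp hw).2
      exact mem_biUnion.mpr ⟨b, by simpa using hab, by simpa using hbw⟩
    calc #(univ.filter (relPow E (d + 1) a)) ≤ #(univ.filter (relPow E d a)) * k :=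
          (card_le_card hsub).trans (card_biUnion_le_card_mul _ _ _ fun b _ => hout b)
      _ ≤ k ^ (d + 1) := by rw [pow_succ]; gcongr

theorem card_filter_dist_le (hout : ∀ u : V, {w | E u w}.ncard ≤ k) {m : ℕ} (r : V)
    {v : Fin m → V} (hv : Function.Injective v) (hvr : ∀ i, v i ≠ r) {dist : Fin m → ℕ}
    (hpath : ∀ i, relPow E (dist i) r (v i)) (d : ℕ) :
    #{i | dist i ≤ d} ≤ ∑ j ∈ Icc 1 d, k ^ j := by
  classical
  have hpos : ∀ i, 1 ≤ dist i := fun i =>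
    Nat.one_le_iff_ne_zero.mpr fun h0 => hvr i <| Eq.symm <| by simpa [h0, relPow] using hpath i
  calc #{i | dist i ≤ d}
      ≤ #((Icc 1 d).biUnion fun j => univ.filter (relPow E j r)) :=
        card_le_card_of_injOn v (fun i hi => mem_biUnion.mpr
          ⟨dist i, mem_Icc.mpr ⟨hpos i, (mem_filter.mp hi).2⟩,
            mem_filter.mpr ⟨mem_univ _, hpath i⟩⟩) hv.injOn
    _ ≤ ∑ j ∈ Icc 1 d, #(univ.filter (relPow E j r)) := card_biUnion_le
    _ ≤ ∑ j ∈ Icc 1 d, k ^ j := sum_le_sum fun j _ => by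
        simpa [Set.ncard_eq_toFinset_card'] using ncard_setOf_relPow_le hout r j

end Network

theorem sum_Icc_pow_mul_sub_one {R : Type*} [CommRing R] (x : R) (d : ℕ) :
    (∑ j ∈ Icc 1 d, x ^ j) * (x - 1) = x ^ (d + 1) - x := by
  induction d with
  | zero => simp
  | succ d ih =>
    rw [sum_Icc_succ_top (by omega), add_mul, ih]
    ring

theorem slotDepth_le_iff {k : ℕ} (hk : 1 < k) (j d : ℕ) :
    slotDepth k j ≤ d ↔ j ≤ ∑ i ∈ Icc 1 d, k ^ i := by
  have hk' : (1 : ℝ) < k := by exact_mod_cast hk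
  have hpos : 0 < (j : ℝ) * ((k : ℝ) - 1) / k + 1 := by
    have : 0 ≤ (j : ℝ) * ((k : ℝ) - 1) / k := by
      apply div_nonneg (mul_nonneg (Nat.cast_nonneg _) _) <;> linarith
    linarith
  have key : (k : ℝ) ^ d - ((j : ℝ) * ((k : ℝ) - 1) / k + 1) =
      ((∑ i ∈ Icc 1 d, (k : ℝ) ^ i) - j) * (((k : ℝ) - 1) / k) := by
    have := sum_Icc_pow_mul_sub_one (k : ℝ) d
    field_simp
    linear_combination -this
  rw [slotDepth, Nat.ceil_le, Real.logb_le_iff_le_rpow hk' hpos, Real.rpow_natCast, ← sub_nonneg,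
    key, mul_nonneg_iff_of_pos_right (div_pos (by linarith) (by linarith)), sub_nonneg]
  exact_mod_cast Iff.rfl

theorem stmt9_general {V : Type*} [Fintype V] (E : V → V → Prop) (k m : ℕ) (hk : 2 ≤ k)
    (r : V) (v : Fin m → V)
    (hvinj : Function.Injective v) (hvr : ∀ i, v i ≠ r)
    (hout : ∀ u : V, {w | E u w}.ncard ≤ k)
    (p : Fin m → ℝ)
    (hnn : ∀ i, 0 ≤ p i)
    (hmono : ∀ i j : Fin m, i ≤ j → p j ≤ p i)
    (dist : Fin m → ℕ)
    (hdist : ∀ i, IsLeast {n : ℕ | relPow E n r (v i)} (dist i)) :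
    ∑ i : Fin m, p i * (slotDepth k (i.1 + 1) : ℝ) ≤
      ∑ i : Fin m, p i * (dist i : ℝ) := by
  set D := ∑ i, (slotDepth k (i.1 + 1) + dist i)
  have hD : ∀ i, slotDepth k (i.1 + 1) + dist i ≤ D := fun i =>
    single_le_sum (f := fun i : Fin m => slotDepth k (i.1 + 1) + dist i) (fun _ _ => Nat.zero_le _)
      (mem_univ i)
  rw [sum_mul_natCast_eq_sum_range_sum_filter_lt univ p (fun i => slotDepth k (i.1 + 1))
      fun i _ => le_of_add_le_left (hD i),
    sum_mul_natCast_eq_sum_range_sum_filter_lt univ p dist fun i _ => le_of_add_le_right (hD i)]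
  refine sum_le_sum fun d _ => ?_
  have htail : ∀ i : Fin m, d < slotDepth k (i.1 + 1) ↔ ∑ j ∈ Icc 1 d, k ^ j ≤ i.1 := fun i => by
    rw [← not_le, slotDepth_le_iff hk]
    omega
  rw [filter_congr fun i _ => htail i]
  refine sum_le_sum_of_isUpperSet hmono hnn
    (fun i j hij hi => ?_) (Fin.card_filter_le_val_le _ ?_)
  · simp only [mem_coe, mem_filter, mem_univ, true_and] at hi ⊢
    exact hi.trans hij
  · simpa only [compl_filter, not_lt] using
      card_filter_dist_le hout r hvinj hvr (fun i => (hdist i).1) d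

/-- Star-demand lower bound.  All requests go from a root `r` to distinct
destinations `v 1, ..., v m` with probabilities `p 1 ≥ p 2 ≥ ... ≥ p m` summing
to 1.  In any directed network `N` (edge relation `E`) in which every vertex has
out-degree at most `k` (`k ≥ 2`), if `dist i` is the shortest directed path
length from `r` to `v i`, then the weighted average path length
`∑ i, p i * dist i` is at least `∑ i, p i * slotDepth k i`, the value achieved by
the complete `k`-ary tree rooted at `r` with nodes placed in order of decreasing
probability. -/
theorem stmt9 {V : Type*} [Fintype V] (E : V → V → Prop) (k m : ℕ) (hk : 2 ≤ k)
    (r : V) (v : Fin m → V)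
    (hvinj : Function.Injective v) (hvr : ∀ i, v i ≠ r)
    (hout : ∀ u : V, {w | E u w}.ncard ≤ k)
    (p : Fin m → ℝ)
    (hnn : ∀ i, 0 ≤ p i)
    (hmono : ∀ i j : Fin m, i ≤ j → p j ≤ p i)
    (hsum : ∑ i, p i = 1)
    (dist : Fin m → ℕ)
    (hdist : ∀ i, IsLeast {n : ℕ | relPow E n r (v i)} (dist i)) :
    ∑ i : Fin m, p i * (slotDepth k (i.1 + 1) : ℝ) ≤
      ∑ i : Fin m, p i * (dist i : ℝ) :=
  stmt9_general E k m hk r v hvinj hvr hout p hnn hmono dist hdist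
end

section
/- Greedy matching 1/2-approximation: in a finite weighted graph with positive edge weights, the matching produced by the greedy algorithm (repeatedly selecting the heaviest edge not conflicting with previously chosen edges) has total weight at least half the weight of a maximum-weight matching. -/
/-- Two undirected edges (elements of `Sym2 V`) conflict if they share a vertex. -/
def SharesVertex {V : Type*} (e f : Sym2 V) : Prop := ∃ a : V, a ∈ e ∧ a ∈ f

-- The greedy matching algorithm: process the edges in the given order
-- (heaviest first), keeping each edge iff it conflicts with no previously kept
-- edge.  `acc` is the list of edges kept so far.
open Classical in
noncomputable def greedyAux {V : Type*} (acc : List (Sym2 V)) :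
    List (Sym2 V) → List (Sym2 V)
  | [] => acc.reverse
  | e :: rest =>
      if ∀ f ∈ acc, ¬ SharesVertex e f then greedyAux (e :: acc) rest
      else greedyAux acc rest

/-- The matching produced by the greedy algorithm on the edge list `E`. -/
noncomputable def greedyMatching {V : Type*} (E : List (Sym2 V)) : List (Sym2 V) :=
  greedyAux [] E

/-!
Charge every edge `e` of the matching `M` to a greedy edge that shares a vertex with `e` and is
at least as heavy. Such an edge exists: when the greedy algorithm reaches `e`, either it keeps
`e` or `e` is blocked by an earlier, hence heavier, kept edge. Since `M` is a matching, a greedy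
edge `s(x, y)` meets at most two edges of `M` (one through `x`, one through `y`), so it is charged
at most twice.
-/

namespace SharesVertex

variable {V : Type*}

theorem refl (e : Sym2 V) : SharesVertex e e :=
  ⟨e.out.1, Sym2.out_fst_mem e, Sym2.out_fst_mem e⟩

theorem symm {e f : Sym2 V} : SharesVertex e f → SharesVertex f e
  | ⟨a, hae, haf⟩ => ⟨a, haf, hae⟩

instance : Std.Symm (fun e f : Sym2 V => ¬ SharesVertex e f) :=
  ⟨fun _ _ h hs => h hs.symm⟩

theorem mk_right_iff {e : Sym2 V} {x y : V} : SharesVertex e s(x, y) ↔ x ∈ e ∨ y ∈ e := by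
  simp only [SharesVertex, Sym2.mem_iff]
  aesop

end SharesVertex

theorem List.Pairwise.nodup_of_not_sharesVertex {V : Type*} {l : List (Sym2 V)}
    (hl : l.Pairwise (fun e f => ¬ SharesVertex e f)) : l.Nodup :=
  hl.imp fun {e f} (h : ¬ SharesVertex e f) (heq : e = f) => h (heq ▸ .refl e)

section Matching

open Finset

variable {V : Type*} {M : Finset (Sym2 V)}

open Classical in
theorem card_filter_mem_le_one
    (hM : (M : Set (Sym2 V)).Pairwise fun e f => ¬ SharesVertex e f) (x : V) :
    #{e ∈ M | x ∈ e} ≤ 1 := by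
  refine Finset.card_le_one.2 fun e he f hf => ?_
  simp only [Finset.mem_filter] at he hf
  by_contra hne
  exact hM he.1 hf.1 hne ⟨x, he.2, hf.2⟩

open Classical in
theorem card_filter_sharesVertex_le_two
    (hM : (M : Set (Sym2 V)).Pairwise fun e f => ¬ SharesVertex e f) (g : Sym2 V) :
    #{e ∈ M | SharesVertex e g} ≤ 2 := by
  induction g using Sym2.ind with
  | _ x y =>
    simp only [SharesVertex.mk_right_iff, Finset.filter_or]
    calc _ ≤ #{e ∈ M | x ∈ e} + #{e ∈ M | y ∈ e} := Finset.card_union_le _ _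
      _ ≤ 1 + 1 := add_le_add (card_filter_mem_le_one hM x) (card_filter_mem_le_one hM y)

theorem sum_le_two_mul_sum_of_forall_exists_sharesVertex {G : Finset (Sym2 V)}
    (w : Sym2 V → ℝ) (hM : (M : Set (Sym2 V)).Pairwise fun e f => ¬ SharesVertex e f)
    (hG : ∀ g ∈ G, 0 ≤ w g) (hcover : ∀ e ∈ M, ∃ g ∈ G, SharesVertex e g ∧ w e ≤ w g) :
    ∑ e ∈ M, w e ≤ 2 * ∑ g ∈ G, w g := by
  classical
  have hcharge : ∀ e ∈ M, w e ≤ ∑ g ∈ G with SharesVertex e g, w g := by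
    intro e he
    obtain ⟨g, hg, hshare, hle⟩ := hcover e he
    exact hle.trans <| Finset.single_le_sum (fun g hg => hG g (Finset.mem_filter.1 hg).1)
      (Finset.mem_filter.2 ⟨hg, hshare⟩)
  calc ∑ e ∈ M, w e ≤ ∑ e ∈ M, ∑ g ∈ G with SharesVertex e g, w g := Finset.sum_le_sum hcharge
    _ = ∑ g ∈ G, ∑ e ∈ M with SharesVertex e g, w g :=
      Finset.sum_comm' fun e g => by simp only [Finset.mem_filter]; tauto
    _ = ∑ g ∈ G, (#{e ∈ M | SharesVertex e g} : ℝ) * w g := by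
      simp only [Finset.sum_const, nsmul_eq_mul]
    _ ≤ ∑ g ∈ G, 2 * w g := Finset.sum_le_sum fun g hg =>
      mul_le_mul_of_nonneg_right (by exact_mod_cast card_filter_sharesVertex_le_two hM g) (hG g hg)
    _ = 2 * ∑ g ∈ G, w g := Finset.mul_sum _ _ _ |>.symm

end Matching

section Greedy

variable {V : Type*}

theorem mem_greedyAux_of_mem_acc (l : List (Sym2 V)) :
    ∀ {acc : List (Sym2 V)} {f : Sym2 V}, f ∈ acc → f ∈ greedyAux acc l := by
  induction l with
  | nil => intro acc f hf; simpa [greedyAux] using hf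
  | cons e rest ih =>
    intro acc f hf
    rw [greedyAux]
    split
    · exact ih (List.mem_cons_of_mem _ hf)
    · exact ih hf

theorem mem_or_mem_of_mem_greedyAux (l : List (Sym2 V)) :
    ∀ {acc : List (Sym2 V)} {g : Sym2 V}, g ∈ greedyAux acc l → g ∈ acc ∨ g ∈ l := by
  induction l with
  | nil => intro acc g hg; simpa [greedyAux] using hg
  | cons e rest ih =>
    intro acc g hg
    rw [greedyAux] at hg
    split at hg
    · rcases ih hg with h | h
      · rcases List.mem_cons.1 h with rfl | h
        · exact Or.inr List.mem_cons_self
        · exact Or.inl h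
      · exact Or.inr (List.mem_cons_of_mem _ h)
    · exact (ih hg).imp_right (List.mem_cons_of_mem _)

theorem pairwise_greedyAux (l : List (Sym2 V)) :
    ∀ {acc : List (Sym2 V)}, acc.Pairwise (fun e f => ¬ SharesVertex e f) →
      (greedyAux acc l).Pairwise (fun e f => ¬ SharesVertex e f) := by
  induction l with
  | nil =>
    intro acc hacc
    rw [greedyAux, List.pairwise_reverse]
    exact hacc.imp fun h hs => h hs.symm
  | cons e rest ih =>
    intro acc hacc
    rw [greedyAux]
    split
    · next hfree => exact ih (List.pairwise_cons.2 ⟨hfree, hacc⟩)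
    · exact ih hacc

theorem exists_mem_greedyAux_sharesVertex_le (w : Sym2 V → ℝ) (l : List (Sym2 V)) :
    ∀ {acc : List (Sym2 V)}, l.Pairwise (fun e f => w f ≤ w e) →
      (∀ f ∈ acc, ∀ e ∈ l, w e ≤ w f) →
      ∀ e ∈ l, ∃ g ∈ greedyAux acc l, SharesVertex e g ∧ w e ≤ w g := by
  induction l with
  | nil => simp
  | cons a rest ih =>
    intro acc hsorted hdom e he
    obtain ⟨ha_heaviest, hsorted⟩ := List.pairwise_cons.1 hsorted
    rw [greedyAux]
    split
    · rcases List.mem_cons.1 he with rfl | he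
      · exact ⟨e, mem_greedyAux_of_mem_acc rest List.mem_cons_self, .refl e, le_rfl⟩
      · refine ih hsorted (fun f hf x hx => ?_) e he
        rcases List.mem_cons.1 hf with rfl | hf
        · exact ha_heaviest x hx
        · exact hdom f hf x (List.mem_cons_of_mem _ hx)
    · next hblocked =>
      rcases List.mem_cons.1 he with rfl | he
      · simp only [not_forall, not_not] at hblocked
        obtain ⟨f, hf, hshare⟩ := hblocked
        exact ⟨f, mem_greedyAux_of_mem_acc rest hf, hshare, hdom f hf e List.mem_cons_self⟩
      · exact ih hsorted (fun f hf x hx => hdom f hf x (List.mem_cons_of_mem _ hx)) e he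

theorem mem_of_mem_greedyMatching {E : List (Sym2 V)} {g : Sym2 V}
    (hg : g ∈ greedyMatching E) : g ∈ E :=
  (mem_or_mem_of_mem_greedyAux E hg).resolve_left List.not_mem_nil

theorem pairwise_greedyMatching (E : List (Sym2 V)) :
    (greedyMatching E).Pairwise (fun e f => ¬ SharesVertex e f) :=
  pairwise_greedyAux E List.Pairwise.nil

theorem exists_mem_greedyMatching_sharesVertex_le {E : List (Sym2 V)} (w : Sym2 V → ℝ)
    (hsorted : E.Pairwise (fun e f => w f ≤ w e)) {e : Sym2 V} (he : e ∈ E) :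
    ∃ g ∈ greedyMatching E, SharesVertex e g ∧ w e ≤ w g :=
  exists_mem_greedyAux_sharesVertex_le w E hsorted (by simp) e he

end Greedy

theorem stmt13_general {V : Type*} (E : List (Sym2 V)) (w : Sym2 V → ℝ)
    (hpos : ∀ e ∈ E, 0 < w e)
    (hsorted : E.Pairwise (fun e f => w f ≤ w e))
    (M : List (Sym2 V))
    (hME : ∀ e ∈ M, e ∈ E)
    (hMnd : M.Nodup)
    (hMmatch : M.Pairwise (fun e f => ¬ SharesVertex e f)) :
    (M.map w).sum ≤ 2 * ((greedyMatching E).map w).sum := by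
  classical
  have hGnd := (pairwise_greedyMatching E).nodup_of_not_sharesVertex
  rw [← List.sum_toFinset w hMnd, ← List.sum_toFinset w hGnd]
  refine sum_le_two_mul_sum_of_forall_exists_sharesVertex w ?_ ?_ ?_
  · simpa only [List.coe_toFinset] using hMmatch.set_pairwise
  · exact fun g hg => (hpos g (mem_of_mem_greedyMatching (List.mem_toFinset.1 hg))).le
  · intro e he
    obtain ⟨g, hg, hshare⟩ :=
      exists_mem_greedyMatching_sharesVertex_le w hsorted (hME e (List.mem_toFinset.1 he))
    exact ⟨g, List.mem_toFinset.2 hg, hshare⟩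

/-- Greedy matching is a 1/2-approximation: in a finite weighted graph with
positive edge weights and no self-loops, whose edges `E` are listed in
non-increasing order of weight, the matching produced by the greedy algorithm
(repeatedly selecting the heaviest edge not conflicting with previously chosen
edges) has total weight at least half the weight of any matching `M` (a
duplicate-free set of pairwise non-adjacent edges of the graph); in particular,
at least half the weight of a maximum-weight matching. -/
theorem stmt13 {V : Type*} [Fintype V] (E : List (Sym2 V)) (w : Sym2 V → ℝ)
    (hpos : ∀ e ∈ E, 0 < w e)
    (hloop : ∀ e ∈ E, ¬ e.IsDiag)
    (hsorted : E.Pairwise (fun e f => w f ≤ w e))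
    (M : List (Sym2 V))
    (hME : ∀ e ∈ M, e ∈ E)
    (hMnd : M.Nodup)
    (hMmatch : M.Pairwise (fun e f => ¬ SharesVertex e f)) :
    (M.map w).sum ≤ 2 * ((greedyMatching E).map w).sum :=
  stmt13_general E w hpos hsorted M hME hMnd hMmatch
end
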